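/- arXiv:2205.14016 — 2 statements merged into one kernel-verified Lean document; each statement's English description precedes it below -/
import Mathlib

section
/- Let Φ denote the standard normal CDF, fix C > 0, and define γ(x) = 1 - Φ(Φ⁻¹(1-x) - C) for x ∈ (0,1). Then for all 0 < p < α < 1 one has p/α < γ(p)/γ(α); equivalently, γ(x)/x is strictly decreasing in x. -/
/-!
Write `G x = ∫_x^∞ e^{-t²/2} dt`, so that `x = G(b)/√(2π)` and `γ(x) = G(b - C)/√(2π)` for
`b = Φ⁻¹(1 - x)`. Shifting the integrand by `C` multiplies it by the increasing likelihood ratio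
`ρ(t) = e^{Ct - C²/2}`, and for a positive density `f` and increasing `ρ` the tail ratio
`∫_b^∞ ρ f / ∫_b^∞ f` increases strictly with `b`. Since `x ↦ Φ⁻¹(1 - x)` is decreasing, this is the
claim.
-/

open Real MeasureTheory

/-- Standard normal CDF. -/
noncomputable def Phi (x : ℝ) : ℝ :=
  (Real.sqrt (2 * Real.pi))⁻¹ * ∫ t in Set.Iic x, Real.exp (-t ^ 2 / 2)

open Set

section LikelihoodRatio

variable {f ρ : ℝ → ℝ} {a b : ℝ}

theorem setIntegral_Ioi_pos (hf : IntegrableOn f (Ioi a)) (hpos : ∀ t ∈ Ioi a, 0 < f t) :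
    0 < ∫ t in Ioi a, f t := by
  rw [setIntegral_pos_iff_support_of_nonneg_ae
    ((ae_restrict_iff' measurableSet_Ioi).2 (ae_of_all _ fun t ht => (hpos t ht).le)) hf,
    inter_eq_right.2 fun t ht => Function.mem_support.2 (hpos t ht).ne', volume_Ioi]
  exact ENNReal.zero_lt_top

/-- Splitting `(a, ∞)` at `b`, the mass of `ρ f` on `(a, b]` is at most `ρ b` times that of `f`,
and on `(b, ∞)` strictly more. -/
theorem integral_Ioi_mul_lt_of_strictMonoOn (hf : IntegrableOn f (Ioi a))
    (hρf : IntegrableOn (fun t => ρ t * f t) (Ioi a)) (hf_pos : ∀ t ∈ Ioi a, 0 < f t)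
    (hρ : StrictMonoOn ρ (Ioi a)) (hab : a < b) :
    (∫ t in Ioi b, f t) * (∫ t in Ioi a, ρ t * f t) <
      (∫ t in Ioi b, ρ t * f t) * ∫ t in Ioi a, f t := by
  have hIoi : Ioi b ⊆ Ioi a := Ioi_subset_Ioi hab.le
  have hIoc : Ioc a b ⊆ Ioi a := Ioc_subset_Ioi_self
  have hf_ab : IntervalIntegrable f volume a b :=
    (intervalIntegrable_iff_integrableOn_Ioc_of_le hab.le).2 (hf.mono_set hIoc)
  have hρf_ab : IntervalIntegrable (fun t => ρ t * f t) volume a b :=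
    (intervalIntegrable_iff_integrableOn_Ioc_of_le hab.le).2 (hρf.mono_set hIoc)
  have hb : b ∈ Ioi a := hab
  have head_pos : 0 < ∫ t in a..b, f t :=
    intervalIntegral.intervalIntegral_pos_of_pos_on hf_ab (fun t ht => hf_pos t ht.1) hab
  have tail_nonneg : 0 ≤ ∫ t in Ioi b, f t :=
    setIntegral_nonneg measurableSet_Ioi fun t ht => (hf_pos t (hIoi ht)).le
  have head_le : ∫ t in a..b, ρ t * f t ≤ ρ b * ∫ t in a..b, f t := by
    rw [← intervalIntegral.integral_const_mul]
    refine intervalIntegral.integral_mono_on_of_le_Ioo hab.le hρf_ab (hf_ab.const_mul _)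
      fun t ht => mul_le_mul_of_nonneg_right ?_ (hf_pos t ht.1).le
    exact hρ.monotoneOn ht.1 hb ht.2.le
  have tail_lt : ρ b * ∫ t in Ioi b, f t < ∫ t in Ioi b, ρ t * f t := by
    rw [← sub_pos, ← integral_const_mul, ← integral_sub (hρf.mono_set hIoi)
      ((hf.mono_set hIoi).const_mul _)]
    refine setIntegral_Ioi_pos ((hρf.mono_set hIoi).sub ((hf.mono_set hIoi).const_mul _))
      fun t ht => ?_
    rw [← sub_mul]
    exact mul_pos (sub_pos.2 (hρ hb (hIoi ht) ht)) (hf_pos t (hIoi ht))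
  rw [← intervalIntegral.integral_interval_add_Ioi hρf (hρf.mono_set hIoi),
    ← intervalIntegral.integral_interval_add_Ioi hf (hf.mono_set hIoi)]
  nlinarith [mul_le_mul_of_nonneg_left head_le tail_nonneg, mul_lt_mul_of_pos_left tail_lt head_pos]

end LikelihoodRatio

theorem integrable_exp_neg_sq_div_two : Integrable fun t : ℝ => exp (-t ^ 2 / 2) := by
  convert integrable_exp_neg_mul_sq (b := (2⁻¹ : ℝ)) (by norm_num) using 2
  ring_nf

theorem integral_exp_neg_sq_div_two : ∫ t : ℝ, exp (-t ^ 2 / 2) = √(2 * π) := by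
  convert integral_gaussian (2⁻¹ : ℝ) using 2
  · ring_nf
  · ring_nf

noncomputable def gaussianTail (x : ℝ) : ℝ := ∫ t in Ioi x, exp (-t ^ 2 / 2)

theorem gaussianTail_pos (x : ℝ) : 0 < gaussianTail x :=
  setIntegral_Ioi_pos integrable_exp_neg_sq_div_two.integrableOn fun _ _ => exp_pos _

theorem one_sub_Phi (x : ℝ) : 1 - Phi x = (√(2 * π))⁻¹ * gaussianTail x := by
  have hsplit := intervalIntegral.integral_Iic_add_Ioi (b := x)
    integrable_exp_neg_sq_div_two.integrableOn integrable_exp_neg_sq_div_two.integrableOn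
  rw [integral_exp_neg_sq_div_two] at hsplit
  have hnorm : (√(2 * π))⁻¹ * √(2 * π) = 1 := inv_mul_cancel₀ (by positivity)
  rw [Phi, gaussianTail]
  linear_combination -hnorm - (√(2 * π))⁻¹ * hsplit

theorem Phi_monotone : Monotone Phi := fun _ _ hxy =>
  mul_le_mul_of_nonneg_left (setIntegral_mono_set integrable_exp_neg_sq_div_two.integrableOn
    (ae_of_all _ fun _ => (exp_pos _).le) (Iic_subset_Iic.2 hxy).eventuallyLE) (by positivity)

theorem exp_neg_sub_sq_div_two (C t : ℝ) :
    exp (-(t - C) ^ 2 / 2) = exp (C * t - C ^ 2 / 2) * exp (-t ^ 2 / 2) := by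
  rw [← exp_add]
  ring_nf

theorem gaussianTail_sub (x C : ℝ) :
    gaussianTail (x - C) = ∫ t in Ioi x, exp (C * t - C ^ 2 / 2) * exp (-t ^ 2 / 2) := by
  simp_rw [gaussianTail, ← exp_neg_sub_sq_div_two]
  simpa using ((measurePreserving_sub_right volume C).setIntegral_preimage_emb
    (measurableEmbedding_subRight C) (fun t => exp (-t ^ 2 / 2)) (Ioi (x - C))).symm

theorem gaussianTail_mul_lt {a b C : ℝ} (hab : a < b) (hC : 0 < C) :
    gaussianTail b * gaussianTail (a - C) < gaussianTail (b - C) * gaussianTail a := by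
  have hint : Integrable fun t => exp (C * t - C ^ 2 / 2) * exp (-t ^ 2 / 2) := by
    simpa only [← exp_neg_sub_sq_div_two] using integrable_exp_neg_sq_div_two.comp_sub_right C
  rw [gaussianTail_sub, gaussianTail_sub]
  refine integral_Ioi_mul_lt_of_strictMonoOn integrable_exp_neg_sq_div_two.integrableOn
    hint.integrableOn (fun _ _ => exp_pos _) (fun s _ t _ hst => ?_) hab
  exact exp_lt_exp.2 (by nlinarith)

theorem power_ratio_decreasing (C : ℝ) (hC : 0 < C)
    (Phinv : ℝ → ℝ) (hPhinv : ∀ y ∈ Set.Ioo (0:ℝ) 1, Phi (Phinv y) = y)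
    (γ : ℝ → ℝ) (hγ : ∀ x ∈ Set.Ioo (0:ℝ) 1, γ x = 1 - Phi (Phinv (1 - x) - C))
    (p α : ℝ) (hp : 0 < p) (hpα : p < α) (hα : α < 1) :
    p / α < γ p / γ α := by
  rw [hγ p ⟨hp, hpα.trans hα⟩, hγ α ⟨hp.trans hpα, hα⟩]
  set b := Phinv (1 - p)
  set a := Phinv (1 - α)
  have hb : 1 - Phi b = p := by rw [hPhinv _ ⟨by linarith, by linarith⟩]; ring
  have ha : 1 - Phi a = α := by rw [hPhinv _ ⟨by linarith, by linarith⟩]; ring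
  have hab : a < b := Phi_monotone.reflect_lt (by linarith)
  rw [← hb, ← ha, one_sub_Phi, one_sub_Phi, one_sub_Phi, one_sub_Phi,
    mul_div_mul_left _ _ (by positivity), mul_div_mul_left _ _ (by positivity),
    div_lt_div_iff₀ (gaussianTail_pos a) (gaussianTail_pos (a - C))]
  exact gaussianTail_mul_lt hab hC
end

section
/- Let β > 0, and let a: (0, α] → [0,1] and γ: (0, α] → [0,1] satisfy a(α) = α, a(p) ≤ p, 0 ≤ a(p) ≤ a(α), 0 ≤ γ(p) < γ(α) ≤ 1, for fixed 0 < p < α < 1. Define the likelihood ratio L(j) = ((γ(α) − γ(p))/(a(α) − a(p)))^j ((β + a(α))/(β + γ(α)))^{j+κ} for κ > 0. Then L(j+1) < L(j) for all j ≥ 0 if and only if (α − a(p))·(β + γ(α)) > (γ(α) − γ(p))·(β + α); in particular this holds whenever β < (α γ(p) − p γ(α))/((γ(α) − γ(p)) − (α − p)) and the denominator of this bound is positive, using a(p) ≤ p. -/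
open Real

/-! Writing `L(j) = r ^ j * s ^ (j + κ)` with `r = (γ α - γ p) / (a α - a p)` and
`s = (β + a α) / (β + γ α)`, consecutive terms have ratio `L(j + 1) / L(j) = r * s`, so `L`
decreases at every step exactly when `r * s < 1`; clearing denominators gives the stated
criterion. The explicit bound on `β` is that criterion with `a p` replaced by the larger `p`. -/

theorem pow_mul_rpow_succ_lt_iff {r s : ℝ} (hr : 0 < r) (hs : 0 < s) (x : ℝ) (j : ℕ) :
    r ^ (j + 1) * s ^ ((j : ℝ) + 1 + x) < r ^ j * s ^ ((j : ℝ) + x) ↔ r * s < 1 := by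
  have hpos : 0 < r ^ j * s ^ ((j : ℝ) + x) := mul_pos (pow_pos hr j) (rpow_pos_of_pos hs _)
  rw [add_right_comm, rpow_add_one hs.ne', pow_succ,
    show r ^ j * r * (s ^ ((j : ℝ) + x) * s) = r ^ j * s ^ ((j : ℝ) + x) * (r * s) by ring]
  exact mul_lt_iff_lt_one_right hpos

theorem forall_pow_mul_rpow_succ_lt_iff {r s : ℝ} (hr : 0 < r) (hs : 0 < s) (x : ℝ) :
    (∀ j : ℕ, r ^ (j + 1) * s ^ ((j : ℝ) + 1 + x) < r ^ j * s ^ ((j : ℝ) + x)) ↔ r * s < 1 := by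
  simp only [pow_mul_rpow_succ_lt_iff hr hs, forall_const]

theorem sub_mul_add_lt_of_lt_div {β p α c u v : ℝ} (hc : c ≤ p) (hv : 0 < β + v)
    (hD : 0 < (v - u) - (α - p)) (hβ : β < (α * u - p * v) / ((v - u) - (α - p))) :
    (v - u) * (β + α) < (α - c) * (β + v) := by
  have hβD : β * ((v - u) - (α - p)) < α * u - p * v := (lt_div_iff₀ hD).mp hβ
  calc (v - u) * (β + α) < (α - p) * (β + v) := by linarith
    _ ≤ (α - c) * (β + v) := by gcongr

theorem homogeneous_paradox_general (κ β p α : ℝ) (a γ : ℝ → ℝ)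
    (hβ : 0 < β) (hp : 0 < p) (hpα : p < α)
    (haα : a α = α) (hap : a p ≤ p)
    (hγp0 : 0 ≤ γ p) (hγpα : γ p < γ α) :
    ((∀ j : ℕ,
        ((γ α - γ p) / (a α - a p)) ^ (j+1) *
          ((β + a α) / (β + γ α)) ^ ((j:ℝ) + 1 + κ) <
        ((γ α - γ p) / (a α - a p)) ^ j *
          ((β + a α) / (β + γ α)) ^ ((j:ℝ) + κ))
      ↔ (γ α - γ p) * (β + α) < (α - a p) * (β + γ α)) ∧
    (0 < (γ α - γ p) - (α - p) →
      β < (α * γ p - p * γ α) / ((γ α - γ p) - (α - p)) →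
      ∀ j : ℕ,
        ((γ α - γ p) / (a α - a p)) ^ (j+1) *
          ((β + a α) / (β + γ α)) ^ ((j:ℝ) + 1 + κ) <
        ((γ α - γ p) / (a α - a p)) ^ j *
          ((β + a α) / (β + γ α)) ^ ((j:ℝ) + κ)) := by
  have hden : 0 < a α - a p := by linarith
  have hβγ : 0 < β + γ α := by linarith
  have hβa : 0 < β + a α := by linarith
  have hratio : (γ α - γ p) / (a α - a p) * ((β + a α) / (β + γ α)) < 1 ↔
      (γ α - γ p) * (β + α) < (α - a p) * (β + γ α) := by
    rw [div_mul_div_comm, div_lt_one (mul_pos hden hβγ), haα]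
  rw [forall_pow_mul_rpow_succ_lt_iff (div_pos (by linarith) hden) (div_pos hβa hβγ), hratio]
  exact ⟨Iff.rfl, sub_mul_add_lt_of_lt_div hap hβγ⟩

theorem homogeneous_paradox (κ β p α : ℝ) (a γ : ℝ → ℝ)
    (hκ : 0 < κ) (hβ : 0 < β) (hp : 0 < p) (hpα : p < α) (hα : α < 1)
    (haα : a α = α) (hap : a p ≤ p) (hap0 : 0 ≤ a p) (hapα : a p ≤ a α)
    (hγp0 : 0 ≤ γ p) (hγpα : γ p < γ α) (hγα1 : γ α ≤ 1) :
    ((∀ j : ℕ,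
        ((γ α - γ p) / (a α - a p)) ^ (j+1) *
          ((β + a α) / (β + γ α)) ^ ((j:ℝ) + 1 + κ) <
        ((γ α - γ p) / (a α - a p)) ^ j *
          ((β + a α) / (β + γ α)) ^ ((j:ℝ) + κ))
      ↔ (γ α - γ p) * (β + α) < (α - a p) * (β + γ α)) ∧
    (0 < (γ α - γ p) - (α - p) →
      β < (α * γ p - p * γ α) / ((γ α - γ p) - (α - p)) →
      ∀ j : ℕ,
        ((γ α - γ p) / (a α - a p)) ^ (j+1) *
          ((β + a α) / (β + γ α)) ^ ((j:ℝ) + 1 + κ) <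
        ((γ α - γ p) / (a α - a p)) ^ j *
          ((β + a α) / (β + γ α)) ^ ((j:ℝ) + κ)) :=
  homogeneous_paradox_general κ β p α a γ hβ hp hpα haα hap hγp0 hγpα
end
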